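/- arXiv:1601.05468 — 3 statements merged into one kernel-verified Lean document; each statement's English description precedes it below -/
import Mathlib

section
/- Let A = {a_0, a_1, a_2, a_3} ⊂ ℤ² be a nondegenerate planar circuit, f ∈ (ℂ∖{0})^4, and θ ∈ T² such that no two of the four unit numbers f̂_0(θ), f̂_1(θ), f̂_2(θ), f̂_3(θ) are antipodal (f̂_j(θ) ≠ −f̂_k(θ) for j ≠ k), and suppose f is not colopsided at θ. Then exactly two of the four truncated trinomials f_{k̂}(z) = Σ_{j≠k} f_j z^{a_j}, k = 0,1,2,3, are colopsided at θ. -/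
open MeasureTheory Complex

noncomputable section

instance : Fact (0 < 2 * Real.pi) := ⟨by positivity⟩

/-- The real `n`-torus `(ℝ/2πℤ)ⁿ`, carrying the Haar measure of total mass `(2π)ⁿ`. -/
abbrev Torus (n : ℕ) := Fin n → AddCircle (2 * Real.pi)

/-- Projection `ℝⁿ → Tⁿ`. -/
def toTorus {n : ℕ} (θ : Fin n → ℝ) : Torus n := fun i => (θ i : AddCircle (2 * Real.pi))

/-- The Laurent monomial `z ↦ z^a`. -/
def lmon {n : ℕ} (a : Fin n → ℤ) (z : Fin n → ℂ) : ℂ := ∏ i, z i ^ a i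

/-- Evaluation of `Σ_k f_k z^{a_k}`. -/
def evalPoly {n N : ℕ} (a : Fin N → Fin n → ℤ) (f : Fin N → ℂ) (z : Fin n → ℂ) : ℂ :=
  ∑ k, f k * lmon (a k) z

/-- The coamoeba of a function `F` on `(ℂ∖{0})ⁿ`: the image of its zero set under the
componentwise argument mapping, viewed in the torus `(ℝ/2πℤ)ⁿ`. -/
def coamoebaF {n : ℕ} (F : (Fin n → ℂ) → ℂ) : Set (Torus n) :=
  { θ | ∃ z : Fin n → ℂ, (∀ i, z i ≠ 0) ∧ F z = 0 ∧ θ = toTorus fun i => (z i).arg }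

/-- The coamoeba of `Σ_k f_k z^{a_k}`. -/
def coamoeba {n N : ℕ} (a : Fin N → Fin n → ℤ) (f : Fin N → ℂ) : Set (Torus n) :=
  coamoebaF (evalPoly a f)

/-- The matrix `Â` with `k`-th column `(1, a_k)`. -/
def hatA {n : ℕ} (a : Fin (n + 2) → Fin n → ℤ) : Matrix (Fin (n + 1)) (Fin (n + 2)) ℤ :=
  fun i k => Fin.cases 1 (fun i' => a k i') i

/-- The Gale dual `b_k = (−1)^k det(A_k)`, where `A_k` is `Â` with column `k` deleted. -/
def galeB {n : ℕ} (a : Fin (n + 2) → Fin n → ℤ) (k : Fin (n + 2)) : ℤ :=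
  (-1) ^ (k : ℕ) * Matrix.det (Matrix.of fun i j => hatA a i (k.succAbove j))

/-- A nondegenerate circuit: all maximal minors of `Â` are nonvanishing, i.e. every
`n+1` of the `n+2` points affinely span `ℝⁿ`. -/
def NondegCircuit {n : ℕ} (a : Fin (n + 2) → Fin n → ℤ) : Prop :=
  ∀ k, galeB a k ≠ 0

/-- The normalized volume `Vol(A) = Σ_{k : b_k > 0} b_k`. -/
def volA {n : ℕ} (a : Fin (n + 2) → Fin n → ℤ) : ℤ :=
  ∑ k ∈ Finset.univ.filter (fun k => 0 < galeB a k), galeB a k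

/-- The `A`-discriminant binomial associated to a Gale dual vector `b`:
`Δ(x) = Π_{b_k>0} b_k^{b_k} · Π_{b_k<0} x_k^{−b_k} − Π_{b_k<0} b_k^{−b_k} · Π_{b_k>0} x_k^{b_k}`. -/
def discA {n : ℕ} {K : Type*} [Field K] (b : Fin (n + 2) → ℤ) (x : Fin (n + 2) → K) : K :=
  (∏ k ∈ Finset.univ.filter (fun k => 0 < b k), (b k : K) ^ b k) *
    (∏ k ∈ Finset.univ.filter (fun k => b k < 0), x k ^ (-b k)) -
  (∏ k ∈ Finset.univ.filter (fun k => b k < 0), (b k : K) ^ (-b k)) *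
    (∏ k ∈ Finset.univ.filter (fun k => 0 < b k), x k ^ b k)

/-- `f̂(θ) = (c/|c|)·e^{i⟨a,θ⟩}` for a monomial with coefficient `c` and exponent `a`. -/
def fhat {n : ℕ} (a : Fin n → ℤ) (c : ℂ) (θ : Fin n → ℝ) : ℂ :=
  (c / ((‖c‖ : ℝ) : ℂ)) * Complex.exp ((∑ i, (a i : ℝ) * θ i) * Complex.I)

/-- Colopsidedness of `Σ_{k ∈ s} f_k z^{a_k}` at `θ`: all rotated coefficients can be turned
into the closed right half plane, with at least one in the open right half plane. -/
def ColopsidedOn {n N : ℕ} (a : Fin N → Fin n → ℤ) (f : Fin N → ℂ) (s : Finset (Fin N))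
    (θ : Fin n → ℝ) : Prop :=
  ∃ φ : ℝ,
    (∀ k ∈ s, 0 ≤ (Complex.exp (φ * Complex.I) * f k *
      Complex.exp ((∑ i, (a k i : ℝ) * θ i) * Complex.I)).re) ∧
    ∃ k ∈ s, 0 < (Complex.exp (φ * Complex.I) * f k *
      Complex.exp ((∑ i, (a k i : ℝ) * θ i) * Complex.I)).re

/-- A list of monomials (coefficient-exponent pairs) is real at `θ` if all the rotated
coefficients lie on one real line through the origin of `ℂ`. -/
def RealAtMons {n : ℕ} (mons : List (ℂ × (Fin n → ℤ))) (θ : Fin n → ℝ) : Prop :=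
  ∃ w : ℂ, w ≠ 0 ∧ ∀ m ∈ mons, ∃ t : ℝ,
    m.1 * Complex.exp ((∑ i, (m.2 i : ℝ) * θ i) * Complex.I) = (t : ℂ) * w

/-- `Σ_k f_k z^{a_k}` is real at `θ` if all the numbers `f_k e^{i⟨a_k,θ⟩}` lie on one
real line through the origin of `ℂ`. -/
def RealAtIdx {n N : ℕ} (a : Fin N → Fin n → ℤ) (f : Fin N → ℂ) (θ : Fin n → ℝ) : Prop :=
  ∃ w : ℂ, w ≠ 0 ∧ ∀ k, ∃ t : ℝ,
    f k * Complex.exp ((∑ i, (a k i : ℝ) * θ i) * Complex.I) = (t : ℂ) * w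

/-- Arguments of critical points of `Σ f_k z^{a_k}`: points of the torus that are
componentwise arguments of some `z ∈ (ℂ∖{0})ⁿ` with `z_j·∂_j f(z) = 0` for all `j`. -/
def critArgs {n N : ℕ} (a : Fin N → Fin n → ℤ) (f : Fin N → ℂ) : Set (Torus n) :=
  { θ | ∃ z : Fin n → ℂ, (∀ i, z i ≠ 0) ∧
      (∀ j, (∑ k, (a k j : ℂ) * f k * lmon (a k) z) = 0) ∧ θ = toTorus fun i => (z i).arg }

/-- The first polynomial `F₁(z) = f₁ z^{a_0} + z^{a_2} + f₂ z^{a_3}` of a circuit system,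
with `f = (f₁, f₂, f₃, f₄)`. -/
def sysF1 (a : Fin 4 → Fin 2 → ℤ) (f : Fin 4 → ℂ) (z : Fin 2 → ℂ) : ℂ :=
  f 0 * lmon (a 0) z + lmon (a 2) z + f 1 * lmon (a 3) z

/-- The second polynomial `F₂(z) = f₃ z^{a_1} + z^{a_2} + f₄ z^{a_3}` of a circuit system,
with `f = (f₁, f₂, f₃, f₄)`. -/
def sysF2 (a : Fin 4 → Fin 2 → ℤ) (f : Fin 4 → ℂ) (z : Fin 2 → ℂ) : ℂ :=
  f 2 * lmon (a 1) z + lmon (a 2) z + f 3 * lmon (a 3) z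

/-- The real points of a lattice configuration, as a subset of `ℝⁿ`. -/
def realPts {n N : ℕ} (a : Fin N → Fin n → ℤ) : Set (Fin n → ℝ) :=
  Set.range fun k => fun i => (a k i : ℝ)

end

/-! Write `u_k = f_k e^{i⟨a_k,θ⟩}` and sort the arguments `t_0 ≤ t_1 ≤ t_2 ≤ t_3` of the `u_k`.
Points of the circle, no two of them antipodal, are colopsided exactly when they lie in an open
half circle, i.e. when one of their cyclic gaps exceeds `π`. As `f` is not colopsided, the four
cyclic gaps of the `t_k` are all below `π`. Deleting `t_k` merges the two gaps next to it, and the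
merged gaps for `k` and `k + 2` add up to `2π`, so exactly one of the truncations at `k` and at
`k + 2` is colopsided. -/

open Real Finset

def ColopsidedAngles {ι : Type*} (t : ι → ℝ) (s : Finset ι) : Prop :=
  ∃ φ : ℝ, (∀ k ∈ s, 0 ≤ Real.cos (φ + t k)) ∧ ∃ k ∈ s, 0 < Real.cos (φ + t k)

section ColopsidedAngles

variable {ι : Type*}

theorem colopsidedAngles_comp_equiv {κ : Type*} (t : ι → ℝ) (σ : κ ≃ ι) (s : Finset κ) :
    ColopsidedAngles (t ∘ σ) s ↔ ColopsidedAngles t (s.map σ.toEmbedding) := by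
  simp only [ColopsidedAngles, mem_map, exists_exists_and_eq_and, forall_exists_index, and_imp,
    forall_apply_eq_imp_iff₂, Function.comp_apply, Equiv.coe_toEmbedding]

theorem colopsidedAngles_add_int_mul_two_pi (t : ι → ℝ) (m : ι → ℤ) (s : Finset ι) :
    ColopsidedAngles (fun k => t k + m k * (2 * π)) s ↔ ColopsidedAngles t s := by
  simp only [ColopsidedAngles, ← add_assoc, Real.cos_add_int_mul_two_pi]

theorem colopsidedAngles_of_forall_mem_Icc {t : ι → ℝ} {s : Finset ι} {a b : ℝ}
    (hs : s.Nonempty) (hab : b - a < π) (h : ∀ k ∈ s, t k ∈ Set.Icc a b) :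
    ColopsidedAngles t s := by
  obtain ⟨k₀, hk₀⟩ := hs
  have hpos : ∀ k ∈ s, 0 < Real.cos (-((a + b) / 2) + t k) := fun k hk =>
    cos_pos_of_mem_Ioo ⟨by linarith [(h k hk).1], by linarith [(h k hk).2]⟩
  exact ⟨_, fun k hk => (hpos k hk).le, k₀, hk₀, hpos k₀ hk₀⟩

theorem sin_sub_mul_cos_add_cyclic_sum (φ x y z : ℝ) :
    Real.sin (z - y) * Real.cos (φ + x) + Real.sin (x - z) * Real.cos (φ + y) +
      Real.sin (y - x) * Real.cos (φ + z) = 0 := by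
  simp only [Real.sin_sub, Real.cos_add]
  ring

variable [DecidableEq ι]

theorem not_colopsidedAngles_triple {t : ι → ℝ} {i j k : ι} (hij : t j - t i < π)
    (hjk : t k - t j < π) (hik : π < t k - t i) : ¬ ColopsidedAngles t {i, j, k} := by
  rintro ⟨φ, hnonneg, l, hl, hl_pos⟩
  have ci := hnonneg i (by simp)
  have cj := hnonneg j (by simp)
  have ck := hnonneg k (by simp)
  -- the origin is the combination of the three points with these positive weights
  have si : 0 < Real.sin (t k - t j) := sin_pos_of_pos_of_lt_pi (by linarith) hjk
  have sj : 0 < Real.sin (t i - t k) := by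
    rw [← Real.sin_add_two_pi]
    exact sin_pos_of_pos_of_lt_pi (by linarith) (by linarith)
  have sk : 0 < Real.sin (t j - t i) := sin_pos_of_pos_of_lt_pi (by linarith) hij
  have hsum := sin_sub_mul_cos_add_cyclic_sum φ (t i) (t j) (t k)
  have := mul_nonneg si.le ci
  have := mul_nonneg sj.le cj
  have := mul_nonneg sk.le ck
  simp only [mem_insert, mem_singleton] at hl
  rcases hl with rfl | rfl | rfl
  · linarith [mul_pos si hl_pos]
  · linarith [mul_pos sj hl_pos]
  · linarith [mul_pos sk hl_pos]

theorem colopsidedAngles_triple_iff {t : ι → ℝ} {i j k : ι} (hij₀ : t i ≤ t j)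
    (hjk₀ : t j ≤ t k) (hij : t j - t i < π) (hjk : t k - t j < π) (hik : t k - t i ≠ π) :
    ColopsidedAngles t {i, j, k} ↔ t k - t i < π := by
  refine ⟨fun h => hik.lt_or_gt.resolve_right fun hgt => not_colopsidedAngles_triple hij hjk hgt h,
    fun h => colopsidedAngles_of_forall_mem_Icc (insert_nonempty _ _) h ?_⟩
  simp only [mem_insert, mem_singleton]
  rintro l (rfl | rfl | rfl) <;> constructor <;> linarith

end ColopsidedAngles

theorem ncard_setOf_fin_four_eq_two {P : Fin 4 → Prop} (h₂ : P 2 ↔ ¬ P 0) (h₁ : P 1 ↔ ¬ P 3) :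
    {k | P k}.ncard = 2 := by
  classical
  rw [← coe_filter_univ, Set.ncard_coe_finset, card_filter, Fin.sum_univ_four]
  by_cases h₀ : P 0 <;> by_cases h₃ : P 3 <;> simp [h₀, h₁, h₂, h₃]

section SortedAngles

variable {t : Fin 4 → ℝ} (hmono : Monotone t) (hspread : t 3 < t 0 + 2 * π)
  (hanti : ∀ j k, j ≠ k → t j - t k ≠ π)
include hmono hspread hanti

theorem cyclic_gaps_lt_pi_of_not_colopsidedAngles (hnl : ¬ ColopsidedAngles t univ) :
    t 1 - t 0 < π ∧ t 2 - t 1 < π ∧ t 3 - t 2 < π ∧ t 0 + 2 * π - t 3 < π := by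
  have h₀₁ := hmono (show (0 : Fin 4) ≤ 1 by decide)
  have h₁₂ := hmono (show (1 : Fin 4) ≤ 2 by decide)
  have h₂₃ := hmono (show (2 : Fin 4) ≤ 3 by decide)
  -- the complement of each cyclic gap is a closed arc containing all four points
  have arc : ∀ (m : Fin 4 → ℤ) (a b : ℝ), (∀ k, t k + m k * (2 * π) ∈ Set.Icc a b) →
      π ≤ b - a := fun m a b h => not_lt.1 fun hab => hnl <|
    (colopsidedAngles_add_int_mul_two_pi t m univ).1 <|
      colopsidedAngles_of_forall_mem_Icc univ_nonempty hab fun k _ => h k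
  have g₀ := arc ![1, 0, 0, 0] (t 1) (t 0 + 2 * π) fun k => by
    refine ⟨?_, ?_⟩ <;> fin_cases k <;> simp <;> linarith
  have g₁ := arc ![1, 1, 0, 0] (t 2) (t 1 + 2 * π) fun k => by
    refine ⟨?_, ?_⟩ <;> fin_cases k <;> simp <;> linarith
  have g₂ := arc ![1, 1, 1, 0] (t 3) (t 2 + 2 * π) fun k => by
    refine ⟨?_, ?_⟩ <;> fin_cases k <;> simp <;> linarith
  have g₃ := arc 0 (t 0) (t 3) fun k => by
    refine ⟨?_, ?_⟩ <;> fin_cases k <;> simp <;> linarith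
  refine ⟨lt_of_le_of_ne ?_ (hanti 1 0 (by decide)), lt_of_le_of_ne ?_ (hanti 2 1 (by decide)),
    lt_of_le_of_ne ?_ (hanti 3 2 (by decide)), lt_of_le_of_ne ?_ fun h => hanti 3 0 (by decide) ?_⟩
    <;> linarith

theorem ncard_colopsidedAngles_erase_of_monotone (hnl : ¬ ColopsidedAngles t univ) :
    {k | ColopsidedAngles t (univ.erase k)}.ncard = 2 := by
  obtain ⟨g₀, g₁, g₂, g₃⟩ := cyclic_gaps_lt_pi_of_not_colopsidedAngles hmono hspread hanti hnl
  have h₀₁ := hmono (show (0 : Fin 4) ≤ 1 by decide)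
  have h₁₂ := hmono (show (1 : Fin 4) ≤ 2 by decide)
  have h₂₃ := hmono (show (2 : Fin 4) ≤ 3 by decide)
  have e₀ : ColopsidedAngles t (univ.erase 0) ↔ t 3 - t 1 < π := by
    rw [show univ.erase (0 : Fin 4) = {1, 2, 3} by decide]
    exact colopsidedAngles_triple_iff h₁₂ h₂₃ g₁ g₂ (hanti 3 1 (by decide))
  have e₃ : ColopsidedAngles t (univ.erase 3) ↔ t 2 - t 0 < π := by
    rw [show univ.erase (3 : Fin 4) = {0, 1, 2} by decide]
    exact colopsidedAngles_triple_iff h₀₁ h₁₂ g₀ g₁ (hanti 2 0 (by decide))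
  have e₁ : ColopsidedAngles t (univ.erase 1) ↔ t 0 + 2 * π - t 2 < π := by
    rw [show univ.erase (1 : Fin 4) = {2, 3, 0} by decide,
      ← colopsidedAngles_add_int_mul_two_pi t ![1, 0, 0, 0], colopsidedAngles_triple_iff]
      <;> simp
    exacts [h₂₃, hspread.le, g₂, g₃, fun h => hanti 2 0 (by decide) (by linarith)]
  have e₂ : ColopsidedAngles t (univ.erase 2) ↔ t 1 + 2 * π - t 3 < π := by
    rw [show univ.erase (2 : Fin 4) = {3, 0, 1} by decide,
      ← colopsidedAngles_add_int_mul_two_pi t ![1, 1, 0, 0], colopsidedAngles_triple_iff]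
      <;> simp
    exacts [hspread.le, h₀₁, g₃, g₀, fun h => hanti 3 1 (by decide) (by linarith)]
  refine ncard_setOf_fin_four_eq_two ?_ ?_
  · rw [e₂, e₀, not_lt, (hanti 3 1 (by decide)).symm.le_iff_lt]
    constructor <;> intro <;> linarith
  · rw [e₁, e₃, not_lt, (hanti 2 0 (by decide)).symm.le_iff_lt]
    constructor <;> intro <;> linarith

end SortedAngles

theorem ncard_colopsidedAngles_erase_eq_two {t : Fin 4 → ℝ}
    (hrange : ∀ k, t k ∈ Set.Ioc (-π) π)
    (hanti : ∀ j k, j ≠ k → t j - t k ≠ π) (hnl : ¬ ColopsidedAngles t univ) :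
    {k | ColopsidedAngles t (univ.erase k)}.ncard = 2 := by
  set σ := Tuple.sort t
  have hσ : ∀ s, ColopsidedAngles (t ∘ σ) s ↔ ColopsidedAngles t (s.map σ.toEmbedding) :=
    colopsidedAngles_comp_equiv t σ
  have hset : {k | ColopsidedAngles t (univ.erase k)} =
      σ '' {k | ColopsidedAngles (t ∘ σ) (univ.erase k)} := by
    ext k
    simp [hσ, map_erase, Set.mem_image_equiv]
  rw [hset, Set.ncard_image_of_injective _ σ.injective]
  refine ncard_colopsidedAngles_erase_of_monotone (Tuple.monotone_sort t) ?_
    (fun j k hjk => hanti _ _ (σ.injective.ne hjk)) (by rwa [hσ, map_univ_equiv])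
  show t (σ 3) < t (σ 0) + 2 * π
  linarith [(hrange (σ 3)).2, (hrange (σ 0)).1]

noncomputable def rotatedCoeff {n N : ℕ} (a : Fin N → Fin n → ℤ) (f : Fin N → ℂ)
    (θ : Fin n → ℝ) (k : Fin N) : ℂ :=
  f k * exp ((∑ i, (a k i : ℝ) * θ i) * I)

theorem re_exp_ofReal_mul_I_mul (φ : ℝ) (u : ℂ) :
    (exp (φ * I) * u).re = ‖u‖ * Real.cos (φ + arg u) := by
  conv_lhs => rw [← norm_mul_exp_arg_mul_I u]
  rw [mul_left_comm, ← Complex.exp_add, ← add_mul, ← ofReal_add, re_ofReal_mul,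
    exp_ofReal_mul_I_re]

theorem colopsidedOn_iff_colopsidedAngles {n N : ℕ} {a : Fin N → Fin n → ℤ} {f : Fin N → ℂ}
    (hf : ∀ k, f k ≠ 0) (θ : Fin n → ℝ) (s : Finset (Fin N)) :
    ColopsidedOn a f s θ ↔ ColopsidedAngles (fun k => arg (rotatedCoeff a f θ k)) s := by
  have hnorm : ∀ k, 0 < ‖rotatedCoeff a f θ k‖ := fun k =>
    norm_pos_iff.2 (mul_ne_zero (hf k) (exp_ne_zero _))
  have hre : ∀ (φ : ℝ) k, (exp (φ * I) * f k * exp ((∑ i, (a k i : ℝ) * θ i) * I)).re =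
      ‖rotatedCoeff a f θ k‖ * Real.cos (φ + arg (rotatedCoeff a f θ k)) := fun φ k => by
    rw [mul_assoc]
    exact re_exp_ofReal_mul_I_mul φ _
  simp only [ColopsidedOn, ColopsidedAngles, hre, mul_nonneg_iff_of_pos_left,
    mul_pos_iff_of_pos_left, hnorm]

theorem fhat_eq_exp_arg_rotatedCoeff {n N : ℕ} (a : Fin N → Fin n → ℤ) {f : Fin N → ℂ}
    {k : Fin N} (hf : f k ≠ 0) (θ : Fin n → ℝ) :
    fhat (a k) (f k) θ = exp (arg (rotatedCoeff a f θ k) * I) := by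
  have hnorm : ‖rotatedCoeff a f θ k‖ = ‖f k‖ := by
    rw [rotatedCoeff, norm_mul, norm_exp_ofReal_mul_I, mul_one]
  have hpos : (0 : ℝ) < ‖rotatedCoeff a f θ k‖ := norm_pos_iff.2 (mul_ne_zero hf (exp_ne_zero _))
  rw [fhat, div_mul_eq_mul_div, ← hnorm, eq_comm, eq_div_iff (ofReal_ne_zero.2 hpos.ne'), mul_comm]
  exact norm_mul_exp_arg_mul_I _

theorem two_truncations_colopsided_general (a : Fin 4 → Fin 2 → ℤ)
    (f : Fin 4 → ℂ) (hf : ∀ k, f k ≠ 0) (θ : Fin 2 → ℝ)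
    (hgen : ∀ j k, j ≠ k → fhat (a j) (f j) θ ≠ -fhat (a k) (f k) θ)
    (hnl : ¬ ColopsidedOn a f Finset.univ θ) :
    Set.ncard {k : Fin 4 | ColopsidedOn a f (Finset.univ.erase k) θ} = 2 := by
  simp only [colopsidedOn_iff_colopsidedAngles hf] at hnl ⊢
  refine ncard_colopsidedAngles_erase_eq_two (fun k => arg_mem_Ioc _)
    (fun j k hjk h => hgen j k hjk ?_) hnl
  rw [fhat_eq_exp_arg_rotatedCoeff a (hf j), fhat_eq_exp_arg_rotatedCoeff a (hf k),
    eq_add_of_sub_eq' h, ofReal_add, add_mul, exp_add_pi_mul_I]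

/-- If no two of the rotated unit coefficients `f̂_k(θ)` are antipodal and
`f` is not colopsided at `θ`, then exactly two of the four truncated trinomials are
colopsided at `θ`. -/
theorem two_truncations_colopsided (a : Fin 4 → Fin 2 → ℤ) (ha : NondegCircuit a)
    (f : Fin 4 → ℂ) (hf : ∀ k, f k ≠ 0) (θ : Fin 2 → ℝ)
    (hgen : ∀ j k, j ≠ k → fhat (a j) (f j) θ ≠ -fhat (a k) (f k) θ)
    (hnl : ¬ ColopsidedOn a f Finset.univ θ) :
    Set.ncard {k : Fin 4 | ColopsidedOn a f (Finset.univ.erase k) θ} = 2 :=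
  two_truncations_colopsided_general a f hf θ hgen hnl
end

section
/- Let A = {a_0, a_1, a_2, a_3} ⊂ ℤ² be a nondegenerate planar circuit, f_1, f_2, f_3, f_4 ∈ ℂ∖{0}, and consider the system F_1(z) = f_1 z^{a_0} + z^{a_2} + f_2 z^{a_3}, F_2(z) = f_3 z^{a_1} + z^{a_2} + f_4 z^{a_3}. If θ ∈ T² is such that not both F_1 and F_2 are real at θ, then the system F_1(z) = F_2(z) = 0 has at most one solution z ∈ (ℂ∖{0})² with Arg(z) = θ. -/
open MeasureTheory Complex

/-! Two solutions `z, w` in the sector over `θ` satisfy `z^{a_k} = r_k e^{i⟨a_k,θ⟩}` and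
`w^{a_k} = s_k e^{i⟨a_k,θ⟩}` with `r, s > 0`, so each equation `F = 0` is a real linear relation
between the three rotated coefficients of `F`. If `F` is not real at `θ`, these coefficients do
not lie on a real line through `0`, and two such relations must be proportional. Hence the ratio
`|w| / |z|` is annihilated by the exponent differences `a_k - a_2` of `F`, which are linearly
independent for a nondegenerate circuit, so `|z| = |w|` and `z = w`. -/

theorem exp_mul_I_eq_of_coe_eq {s t : ℝ} (h : (s : AddCircle (2 * Real.pi)) = t) :
    exp (s * I) = exp (t * I) := by
  have := congrArg (fun u => (AddCircle.toCircle u : ℂ)) h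
  simpa [AddCircle.toCircle_apply_mk, Circle.coe_exp, div_self Real.two_pi_pos.ne'] using this

theorem norm_lmon {n : ℕ} (a : Fin n → ℤ) (z : Fin n → ℂ) : ‖lmon a z‖ = ∏ i, ‖z i‖ ^ a i := by
  simp [lmon, norm_prod, norm_zpow]

theorem lmon_eq_norm_mul_exp {n : ℕ} (a : Fin n → ℤ) {z : Fin n → ℂ} {θ : Fin n → ℝ}
    (hθ : ∀ i, ((z i).arg : AddCircle (2 * Real.pi)) = θ i) :
    lmon a z = ‖lmon a z‖ * exp (↑(∑ i, (a i : ℝ) * θ i) * I) := by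
  have hz : ∀ i, z i = ‖z i‖ * exp (θ i * I) := fun i => by
    rw [← exp_mul_I_eq_of_coe_eq (hθ i), norm_mul_exp_arg_mul_I]
  conv_lhs => rw [lmon, Finset.prod_congr rfl fun i _ => congrArg (· ^ a i) (hz i)]
  simp only [mul_zpow, ← exp_int_mul, Finset.prod_mul_distrib, ← exp_sum, norm_lmon]
  push_cast
  simp only [Finset.sum_mul, mul_assoc]

theorem lmon_sub {n : ℕ} (a b : Fin n → ℤ) {z : Fin n → ℂ} (hz : ∀ i, z i ≠ 0) :
    lmon (a - b) z = lmon a z / lmon b z := by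
  simp only [lmon, Pi.sub_apply, zpow_sub₀ (hz _), Finset.prod_div_distrib]

theorem lmon_ne_zero {n : ℕ} (a : Fin n → ℤ) {z : Fin n → ℂ} (hz : ∀ i, z i ≠ 0) :
    lmon a z ≠ 0 :=
  Finset.prod_ne_zero_iff.mpr fun i _ => zpow_ne_zero _ (hz i)

theorem log_norm_lmon {n : ℕ} (a : Fin n → ℤ) {z : Fin n → ℂ} (hz : ∀ i, z i ≠ 0) :
    Real.log ‖lmon a z‖ = ∑ i, a i * Real.log ‖z i‖ := by
  rw [norm_lmon, Real.log_prod fun i _ => zpow_ne_zero _ (norm_ne_zero_iff.mpr (hz i))]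
  simp only [Real.log_zpow]

theorem norm_eq_of_norm_lmon_eq {n : ℕ} {z w : Fin n → ℂ} (hz : ∀ i, z i ≠ 0) (hw : ∀ i, w i ≠ 0)
    {e : Matrix (Fin n) (Fin n) ℤ} (he : e.det ≠ 0) (h : ∀ j, ‖lmon (e j) z‖ = ‖lmon (e j) w‖)
    (i : Fin n) : ‖z i‖ = ‖w i‖ := by
  set u : Fin n → ℝ := fun i => Real.log ‖z i‖ - Real.log ‖w i‖
  have hdet : (e.map ((↑) : ℤ → ℝ)).det ≠ 0 := by
    rw [← Int.cast_det]; exact_mod_cast he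
  have hu : (e.map ((↑) : ℤ → ℝ)).mulVec u = 0 := funext fun j => by
    have := congrArg Real.log (h j)
    rw [log_norm_lmon _ hz, log_norm_lmon _ hw] at this
    simp only [Matrix.mulVec, dotProduct, Matrix.map_apply, u, mul_sub, Finset.sum_sub_distrib,
      this, sub_self, Pi.zero_apply]
  have := congrFun (Matrix.eq_zero_of_mulVec_eq_zero hdet hu) i
  exact Real.log_injOn_pos (norm_pos_iff.mpr (hz i)) (norm_pos_iff.mpr (hw i)) (sub_eq_zero.mp this)

theorem proportional_of_real_relations {c0 c1 c2 : ℂ} (hc1 : c1 ≠ 0)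
    (hnc : ¬∃ t0 t2 : ℝ, c0 = t0 * c1 ∧ c2 = t2 * c1) {r0 r1 r2 s0 s1 s2 : ℝ}
    (hr : r0 * c0 + r1 * c1 + r2 * c2 = 0) (hs : s0 * c0 + s1 * c1 + s2 * c2 = 0) :
    r0 * s1 = r1 * s0 ∧ r2 * s1 = r1 * s2 := by
  set u := c0 / c1
  set v := c2 / c1
  have hr' : (r0 : ℂ) * u + r1 + r2 * v = 0 := by
    simp only [u, v]; field_simp; linear_combination hr
  have hs' : (s0 : ℂ) * u + s1 + s2 * v = 0 := by
    simp only [u, v]; field_simp; linear_combination hs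
  have hdet : (r0 : ℂ) * s2 - r2 * s0 = 0 := by
    by_contra hdet
    -- Taking imaginary parts kills the constant terms `r1`, `s1`.
    have him : ![u.im, v.im] = 0 := by
      refine Matrix.eq_zero_of_mulVec_eq_zero (M := !![r0, r2; s0, s2]) ?_ (funext fun j => ?_)
      · rw [Matrix.det_fin_two_of]; exact_mod_cast hdet
      · fin_cases j
        · simpa [Matrix.mulVec] using congrArg im hr'
        · simpa [Matrix.mulVec] using congrArg im hs'
    refine hnc ⟨u.re, v.re, ?_, ?_⟩
    · rw [conj_eq_iff_re.mp (conj_eq_iff_im.mpr (congrFun him 0)), div_mul_cancel₀ _ hc1]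
    · rw [conj_eq_iff_re.mp (conj_eq_iff_im.mpr (congrFun him 1)), div_mul_cancel₀ _ hc1]
  have h0 : (r0 : ℂ) * s1 = r1 * s0 := by linear_combination (-s0) * hr' + r0 * hs' - v * hdet
  have h2 : (r2 : ℂ) * s1 = r1 * s2 := by linear_combination (-s2) * hr' + r2 * hs' + u * hdet
  exact ⟨by exact_mod_cast h0, by exact_mod_cast h2⟩

theorem norm_lmon_sub_eq_of_not_realAtMons {n : ℕ} {c0 c2 : ℂ} {b0 b1 b2 : Fin n → ℤ}
    {θ : Fin n → ℝ} (hnr : ¬RealAtMons [(c0, b0), (1, b1), (c2, b2)] θ) {z w : Fin n → ℂ}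
    (hz : ∀ i, z i ≠ 0) (hw : ∀ i, w i ≠ 0)
    (hzθ : ∀ i, ((z i).arg : AddCircle (2 * Real.pi)) = θ i)
    (hwθ : ∀ i, ((w i).arg : AddCircle (2 * Real.pi)) = θ i)
    (hzF : c0 * lmon b0 z + lmon b1 z + c2 * lmon b2 z = 0)
    (hwF : c0 * lmon b0 w + lmon b1 w + c2 * lmon b2 w = 0) :
    ‖lmon (b0 - b1) z‖ = ‖lmon (b0 - b1) w‖ ∧ ‖lmon (b2 - b1) z‖ = ‖lmon (b2 - b1) w‖ := by
  set E : (Fin n → ℤ) → ℂ := fun b => exp (↑(∑ i, (b i : ℝ) * θ i) * I)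
  have relation : ∀ v : Fin n → ℂ, (∀ i, ((v i).arg : AddCircle (2 * Real.pi)) = θ i) →
      c0 * lmon b0 v + lmon b1 v + c2 * lmon b2 v = 0 →
      (‖lmon b0 v‖ : ℂ) * (c0 * E b0) + ‖lmon b1 v‖ * E b1 + ‖lmon b2 v‖ * (c2 * E b2) = 0 := by
    intro v hv h
    rw [lmon_eq_norm_mul_exp b0 hv, lmon_eq_norm_mul_exp b1 hv, lmon_eq_norm_mul_exp b2 hv] at h
    linear_combination h
  have hnc : ¬∃ t0 t2 : ℝ, c0 * E b0 = t0 * E b1 ∧ c2 * E b2 = t2 * E b1 := by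
    rintro ⟨t0, t2, h0, h2⟩
    refine hnr ⟨E b1, exp_ne_zero _, ?_⟩
    simp only [List.mem_cons, List.not_mem_nil, or_false]
    rintro m (rfl | rfl | rfl)
    exacts [⟨t0, h0⟩, ⟨1, by simp [E]⟩, ⟨t2, h2⟩]
  obtain ⟨h0, h2⟩ := proportional_of_real_relations (exp_ne_zero _) hnc
    (relation z hzθ hzF) (relation w hwθ hwF)
  have hz1 := norm_ne_zero_iff.mpr (lmon_ne_zero b1 hz)
  have hw1 := norm_ne_zero_iff.mpr (lmon_ne_zero b1 hw)
  simp only [lmon_sub _ _ hz, lmon_sub _ _ hw, norm_div, div_eq_div_iff hz1 hw1]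
  constructor <;> linarith

theorem norm_eq_of_not_realAtMons {c0 c2 : ℂ} {b0 b1 b2 : Fin 2 → ℤ}
    (hdet : (Matrix.of ![b0 - b1, b2 - b1]).det ≠ 0) {θ : Fin 2 → ℝ}
    (hnr : ¬RealAtMons [(c0, b0), (1, b1), (c2, b2)] θ) {z w : Fin 2 → ℂ}
    (hz : ∀ i, z i ≠ 0) (hw : ∀ i, w i ≠ 0)
    (hzθ : ∀ i, ((z i).arg : AddCircle (2 * Real.pi)) = θ i)
    (hwθ : ∀ i, ((w i).arg : AddCircle (2 * Real.pi)) = θ i)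
    (hzF : c0 * lmon b0 z + lmon b1 z + c2 * lmon b2 z = 0)
    (hwF : c0 * lmon b0 w + lmon b1 w + c2 * lmon b2 w = 0) (i : Fin 2) :
    ‖z i‖ = ‖w i‖ :=
  norm_eq_of_norm_lmon_eq hz hw hdet
    (Fin.forall_fin_two.mpr (norm_lmon_sub_eq_of_not_realAtMons hnr hz hw hzθ hwθ hzF hwF)) i

theorem hatA_zero {n : ℕ} (a : Fin (n + 2) → Fin n → ℤ) (k : Fin (n + 2)) : hatA a 0 k = 1 := rfl
theorem hatA_one (a : Fin 4 → Fin 2 → ℤ) (k : Fin 4) : hatA a 1 k = a k 0 := rfl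
theorem hatA_two (a : Fin 4 → Fin 2 → ℤ) (k : Fin 4) : hatA a 2 k = a k 1 := rfl

theorem galeB_one_eq (a : Fin 4 → Fin 2 → ℤ) :
    galeB a 1 = (Matrix.of ![a 0 - a 2, a 3 - a 2]).det := by
  simp [galeB, Matrix.det_fin_three, Matrix.det_fin_two, Fin.succAbove, hatA_zero, hatA_one,
    hatA_two]
  ring

theorem galeB_zero_eq (a : Fin 4 → Fin 2 → ℤ) :
    galeB a 0 = -(Matrix.of ![a 1 - a 2, a 3 - a 2]).det := by
  simp [galeB, Matrix.det_fin_three, Matrix.det_fin_two, Fin.succAbove, hatA_zero, hatA_one,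
    hatA_two]
  ring

theorem nonreal_at_most_one_solution_general (a : Fin 4 → Fin 2 → ℤ) (ha : NondegCircuit a)
    (g : Fin 4 → ℂ) (θ : Fin 2 → ℝ)
    (hnr : ¬(RealAtMons [(g 0, a 0), (1, a 2), (g 1, a 3)] θ ∧
      RealAtMons [(g 2, a 1), (1, a 2), (g 3, a 3)] θ)) :
    Set.Subsingleton {z : Fin 2 → ℂ | (∀ i, z i ≠ 0) ∧
      sysF1 a g z = 0 ∧ sysF2 a g z = 0 ∧
      ∀ i, ((z i).arg : AddCircle (2 * Real.pi)) = ((θ i : ℝ) : AddCircle (2 * Real.pi))} := by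
  rintro z ⟨hz, hzF1, hzF2, hzθ⟩ w ⟨hw, hwF1, hwF2, hwθ⟩
  have hnorm : ∀ i, ‖z i‖ = ‖w i‖ := by
    rcases not_and_or.mp hnr with hnr1 | hnr2
    · have hdet := ha 1
      rw [galeB_one_eq] at hdet
      exact norm_eq_of_not_realAtMons hdet hnr1 hz hw hzθ hwθ hzF1 hwF1
    · have hdet := ha 0
      rw [galeB_zero_eq, neg_ne_zero] at hdet
      exact norm_eq_of_not_realAtMons hdet hnr2 hz hw hzθ hwθ hzF2 hwF2
  funext i
  exact ext_norm_arg (hnorm i) (arg_coe_angle_eq_iff.mp ((hzθ i).trans (hwθ i).symm))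

/-- If not both `F₁` and `F₂` are real at `θ`, then the circuit system
`F₁ = F₂ = 0` has at most one solution in the sector `Arg⁻¹(θ)`. -/
theorem nonreal_at_most_one_solution (a : Fin 4 → Fin 2 → ℤ) (ha : NondegCircuit a)
    (g : Fin 4 → ℂ) (hg : ∀ k, g k ≠ 0) (θ : Fin 2 → ℝ)
    (hnr : ¬(RealAtMons [(g 0, a 0), (1, a 2), (g 1, a 3)] θ ∧
      RealAtMons [(g 2, a 1), (1, a 2), (g 3, a 3)] θ)) :
    Set.Subsingleton {z : Fin 2 → ℂ | (∀ i, z i ≠ 0) ∧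
      sysF1 a g z = 0 ∧ sysF2 a g z = 0 ∧
      ∀ i, ((z i).arg : AddCircle (2 * Real.pi)) = ((θ i : ℝ) : AddCircle (2 * Real.pi))} :=
  nonreal_at_most_one_solution_general a ha g θ hnr
end

section
/- Let A = {a_0, a_1, a_2, a_3} ⊂ ℤ² be a nondegenerate planar circuit and consider the system F_1(z) = f_1 z^{a_0} + z^{a_2} + f_2 z^{a_3}, F_2(z) = f_3 z^{a_1} + z^{a_2} + f_4 z^{a_3} with f_1, f_2, f_3, f_4 ∈ ℂ∖{0}. Let g_1 be a binomial truncation of F_1 (obtained by deleting one of its three monomials) and g_2 a binomial truncation of F_2, and suppose the segments joining the two exponents of g_1 and of g_2 are not parallel. Then every θ ∈ C_{g_1} ∩ C_{g_2} lies in the closure of L_f = C_{F_1} ∩ C_{F_2}. -/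
open MeasureTheory Complex

/-! If `θ = Arg z` with `g₁(z) = 0`, then at `θ` the two monomials of `g₁` point in opposite
directions, and likewise for `g₂`. A trinomial with affinely independent exponents vanishes over a
point `θ'` exactly when a positive combination of its rotated coefficients `c_k e^{i⟨a_k,θ'⟩}`
vanishes, since the moduli of the monomials can be prescribed freely. Along `θ + sφ` the two
opposite monomials of `g_j` turn against each other with speed `⟨v_j, φ⟩`; since `v₁` and `v₂`
are independent, `φ` can be chosen so that for every small `s > 0` each of these nearly opposite
pairs opens towards the third monomial of its trinomial, so `θ + sφ ∈ L_f`. -/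

open Filter Topology

section TorusMonomial

variable {n : ℕ}

def intDot (e : Fin n → ℤ) : (Fin n → ℝ) →ₗ[ℝ] ℝ where
  toFun ξ := ∑ i, (e i : ℝ) * ξ i
  map_add' ξ η := by simp only [Pi.add_apply, mul_add, Finset.sum_add_distrib]
  map_smul' r ξ := by
    simp only [Pi.smul_apply, smul_eq_mul, RingHom.id_apply, Finset.mul_sum]
    exact Finset.sum_congr rfl fun _ _ => mul_left_comm _ _ _

lemma intDot_apply (e : Fin n → ℤ) (ξ : Fin n → ℝ) : intDot e ξ = ∑ i, (e i : ℝ) * ξ i := rfl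

lemma intDot_sub (e e' : Fin n → ℤ) (ξ : Fin n → ℝ) :
    intDot (e - e') ξ = intDot e ξ - intDot e' ξ := by
  simp only [intDot_apply, Pi.sub_apply, Int.cast_sub, sub_mul, Finset.sum_sub_distrib]

noncomputable def torusMonomial (e : Fin n → ℤ) (c : ℂ) (ξ : Fin n → ℝ) : ℂ :=
  c * exp (intDot e ξ * I)

lemma torusMonomial_ne_zero {e : Fin n → ℤ} {c : ℂ} (hc : c ≠ 0) {ξ : Fin n → ℝ} :
    torusMonomial e c ξ ≠ 0 :=
  mul_ne_zero hc (Complex.exp_ne_zero _)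

lemma torusMonomial_add_smul (e : Fin n → ℤ) (c : ℂ) (ξ φ : Fin n → ℝ) (s : ℝ) :
    torusMonomial e c (ξ + s • φ) = torusMonomial e c ξ * exp ((s * intDot e φ : ℝ) * I) := by
  rw [torusMonomial, torusMonomial, mul_assoc, ← Complex.exp_add, map_add, map_smul, smul_eq_mul]
  push_cast
  ring_nf

lemma lmon_exp (e : Fin n → ℤ) (w : Fin n → ℂ) :
    lmon e (fun i => exp (w i)) = exp (∑ i, (e i : ℂ) * w i) := by
  rw [Complex.exp_sum]
  exact Finset.prod_congr rfl fun i _ => (Complex.exp_int_mul (w i) (e i)).symm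

lemma mul_lmon_exp (e : Fin n → ℤ) (c : ℂ) (x ξ : Fin n → ℝ) :
    c * lmon e (fun i => exp (x i + ξ i * I)) = Real.exp (intDot e x) * torusMonomial e c ξ := by
  have hsum : ∑ i, (e i : ℂ) * (x i + ξ i * I) = intDot e x + intDot e ξ * I := by
    simp only [intDot_apply, mul_add, Finset.sum_add_distrib]
    push_cast
    rw [Finset.sum_mul]
    simp only [mul_assoc]
  rw [lmon_exp, hsum, Complex.exp_add, torusMonomial, Complex.ofReal_exp]
  ring

lemma toTorus_arg_exp (x ξ : Fin n → ℝ) :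
    toTorus (fun i => arg (exp (x i + ξ i * I))) = toTorus ξ := by
  funext i
  have h : arg (exp (x i + ξ i * I)) = toIocMod Real.two_pi_pos (-Real.pi) (ξ i) := by
    rw [Complex.exp_add, ← Complex.ofReal_exp, arg_real_mul _ (Real.exp_pos _), arg_exp_mul_I]
  exact (congrArg _ h).trans (Real.Angle.coe_toIocMod _ _)

lemma arg_eq_of_toTorus_arg_eq {z w : Fin n → ℂ}
    (h : toTorus (fun i => arg (z i)) = toTorus fun i => arg (w i)) (i : Fin n) :
    arg (z i) = arg (w i) :=
  arg_coe_angle_eq_iff.1 (congrFun h i)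

end TorusMonomial

section AffineMatrix

variable {n m : ℕ}

def affineMatrix (E : Fin m → Fin n → ℤ) : Matrix (Fin (n + 1)) (Fin m) ℤ :=
  fun i k => Fin.cases 1 (fun i' => E k i') i

lemma NondegCircuit.det_affineMatrix_ne_zero {a : Fin (n + 2) → Fin n → ℤ} (ha : NondegCircuit a)
    (k : Fin (n + 2)) : (affineMatrix (a ∘ k.succAbove)).det ≠ 0 := by
  have h : galeB a k = (-1) ^ (k : ℕ) * (affineMatrix (a ∘ k.succAbove)).det := rfl
  intro h0
  exact ha k (by rw [h, h0, mul_zero])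

lemma cons_vecMul_affineMatrix (E : Fin m → Fin n → ℤ) (C : ℝ) (x : Fin n → ℝ) (k : Fin m) :
    Matrix.vecMul (Fin.cons C x : Fin (n + 1) → ℝ) ((affineMatrix E).map (Int.cast : ℤ → ℝ)) k
      = C + intDot (E k) x := by
  simp [Matrix.vecMul, dotProduct, Fin.sum_univ_succ, affineMatrix, intDot_apply, mul_comm]

variable {E : Fin (n + 1) → Fin n → ℤ}

lemma isUnit_affineMatrix_map (hE : (affineMatrix E).det ≠ 0) :
    IsUnit ((affineMatrix E).map (Int.cast : ℤ → ℝ)) := by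
  rw [Matrix.isUnit_iff_isUnit_det, isUnit_iff_ne_zero]
  rw [show ((affineMatrix E).map (Int.cast : ℤ → ℝ)).det = ((affineMatrix E).det : ℝ) from
    (RingHom.map_det (Int.castRingHom ℝ) _).symm]
  exact_mod_cast hE

lemma exists_add_intDot_eq (hE : (affineMatrix E).det ≠ 0) (y : Fin (n + 1) → ℝ) :
    ∃ (C : ℝ) (x : Fin n → ℝ), ∀ k, C + intDot (E k) x = y k := by
  obtain ⟨v, hv⟩ := Matrix.vecMul_surjective_iff_isUnit.2 (isUnit_affineMatrix_map hE) y
  refine ⟨v 0, Fin.tail v, fun k => ?_⟩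
  rw [← cons_vecMul_affineMatrix, Fin.cons_self_tail]
  exact congrFun hv k

lemma eq_zero_of_intDot_eq (hE : (affineMatrix E).det ≠ 0) {x : Fin n → ℝ} {C : ℝ}
    (h : ∀ k, intDot (E k) x = C) : x = 0 := by
  have hv : Matrix.vecMul (Fin.cons (-C) x) ((affineMatrix E).map (Int.cast : ℤ → ℝ))
      = Matrix.vecMul (Fin.cons 0 0) ((affineMatrix E).map (Int.cast : ℤ → ℝ)) := by
    funext k
    rw [cons_vecMul_affineMatrix, cons_vecMul_affineMatrix, h, map_zero]
    ring
  exact (Fin.cons_inj.1 (Matrix.vecMul_injective_iff_isUnit.2 (isUnit_affineMatrix_map hE) hv)).2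

end AffineMatrix

lemma eq_zero_of_intDot_sub_succAbove {E : Fin 3 → Fin 2 → ℤ} (hE : (affineMatrix E).det ≠ 0)
    (p : Fin 3) {x : Fin 2 → ℝ} (h₁ : intDot (E (p.succAbove 0) - E (p.succAbove 1)) x = 0)
    (h₂ : intDot (E p - E (p.succAbove 1)) x = 0) : x = 0 := by
  rw [intDot_sub, sub_eq_zero] at h₁ h₂
  refine eq_zero_of_intDot_eq hE (C := intDot (E (p.succAbove 1)) x) fun k => ?_
  rcases Fin.eq_self_or_eq_succAbove p k with rfl | ⟨j, rfl⟩
  · exact h₂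
  · fin_cases j
    exacts [h₁, rfl]

def cross (v w : Fin 2 → ℤ) : ℤ := v 0 * w 1 - v 1 * w 0

lemma exists_intDot_eq_of_cross_ne_zero {v w : Fin 2 → ℤ} (h : cross v w ≠ 0)
    (b₁ b₂ : ℝ) : ∃ x, intDot v x = b₁ ∧ intDot w x = b₂ := by
  have hD : (v 0 * w 1 - v 1 * w 0 : ℝ) ≠ 0 := by exact_mod_cast h
  refine ⟨![(b₁ * w 1 - v 1 * b₂) / (v 0 * w 1 - v 1 * w 0),
    (v 0 * b₂ - b₁ * w 0) / (v 0 * w 1 - v 1 * w 0)], ?_, ?_⟩ <;>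
  · simp only [intDot_apply, Fin.sum_univ_two, Matrix.cons_val_zero, Matrix.cons_val_one]
    rw [mul_div_assoc', mul_div_assoc', ← add_div, div_eq_iff hD]
    ring

def PosDependent {ι : Type*} [Fintype ι] (u : ι → ℂ) : Prop :=
  ∃ A : ι → ℝ, (∀ k, 0 < A k) ∧ ∑ k, (A k : ℂ) * u k = 0

lemma posDependent_of_succAbove {n : ℕ} {u : Fin (n + 1) → ℂ} (p : Fin (n + 1)) {R : ℝ}
    {A : Fin n → ℝ} (hR : 0 < R) (hA : ∀ i, 0 < A i)
    (h : R * u p + ∑ i, (A i : ℂ) * u (p.succAbove i) = 0) : PosDependent u := by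
  refine ⟨Fin.insertNth p R A, fun k => ?_, ?_⟩
  · rcases Fin.eq_self_or_eq_succAbove p k with rfl | ⟨j, rfl⟩
    · simpa using hR
    · simpa using hA j
  · rw [Fin.sum_univ_succAbove _ p]
    simpa using h

section Coamoeba

variable {n : ℕ}

lemma mem_coamoeba_of_posDependent {E : Fin (n + 1) → Fin n → ℤ} (hE : (affineMatrix E).det ≠ 0)
    {c : Fin (n + 1) → ℂ} {ξ : Fin n → ℝ}
    (h : PosDependent fun k => torusMonomial (E k) (c k) ξ) : toTorus ξ ∈ coamoeba E c := by
  obtain ⟨A, hA, hsum⟩ := h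
  obtain ⟨C, x, hx⟩ := exists_add_intDot_eq hE fun k => Real.log (A k)
  refine ⟨fun i => exp (x i + ξ i * I), fun i => Complex.exp_ne_zero _, ?_,
    (toTorus_arg_exp x ξ).symm⟩
  have hmod : ∀ k, Real.exp (intDot (E k) x) = Real.exp (-C) * A k := fun k => by
    rw [← Real.exp_log (hA k), ← Real.exp_add, ← hx k, neg_add_cancel_left]
  simp only [evalPoly, mul_lmon_exp, hmod]
  push_cast
  simp_rw [mul_assoc, ← Finset.mul_sum, hsum, mul_zero]

lemma evalPoly_fin_two (e : Fin 2 → Fin n → ℤ) (c : Fin 2 → ℂ) :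
    evalPoly e c = fun z => c 0 * lmon (e 0) z + c 1 * lmon (e 1) z :=
  funext fun _ => Fin.sum_univ_two _

lemma exists_antiparallel_of_mem_coamoeba {e : Fin 2 → Fin n → ℤ} {c : Fin 2 → ℂ} {θ : Torus n}
    (h : θ ∈ coamoeba e c) :
    ∃ z : Fin n → ℂ, θ = toTorus (fun i => arg (z i)) ∧ ∃ r : ℝ, 0 < r ∧
      torusMonomial (e 0) (c 0) (fun i => arg (z i))
        = -(r * torusMonomial (e 1) (c 1) fun i => arg (z i)) := by
  obtain ⟨z, hz, hg, rfl⟩ := h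
  rw [evalPoly_fin_two] at hg
  set x : Fin n → ℝ := fun i => Real.log ‖z i‖
  refine ⟨z, rfl, Real.exp (intDot (e 1) x - intDot (e 0) x), Real.exp_pos _, ?_⟩
  have hz' : z = fun i => exp (x i + arg (z i) * I) :=
    funext fun i => (Complex.exp_log (hz i)).symm
  rw [hz'] at hg
  beta_reduce at hg
  rw [mul_lmon_exp, mul_lmon_exp] at hg
  rw [Real.exp_sub]
  push_cast at hg ⊢
  field_simp
  linear_combination hg

end Coamoeba

lemma eventually_pos_mul_sin_mul {c : ℝ} (hc : c ≠ 0) :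
    ∀ᶠ s in 𝓝[>] 0, 0 < c * Real.sin (s * c) := by
  filter_upwards [Ioo_mem_nhdsGT (div_pos Real.pi_pos (abs_pos.2 hc))] with s ⟨hs, hsc⟩
  have habs : c * Real.sin (s * c) = |c| * Real.sin (s * |c|) := by
    rcases abs_choice c with h | h <;> rw [h]
    rw [mul_neg, Real.sin_neg]
    ring
  rw [habs]
  exact mul_pos (abs_pos.2 hc) (Real.sin_pos_of_pos_of_lt_pi (by positivity)
    ((lt_div_iff₀ (abs_pos.2 hc)).1 hsc))

def InitiallyPosIm (σ : ℝ) (ρ : ℂ) (c : ℝ) : Prop :=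
  0 < σ * ρ.im ∨ (ρ.im = 0 ∧ 0 < σ * (ρ.re * c))

lemma InitiallyPosIm.ne_zero {σ c : ℝ} {ρ : ℂ} (h : InitiallyPosIm σ ρ c) : σ ≠ 0 := by
  rintro rfl
  rcases h with h | ⟨-, h⟩ <;> simp at h

lemma InitiallyPosIm.eventually {σ c : ℝ} {ρ : ℂ} (h : InitiallyPosIm σ ρ c) :
    ∀ᶠ s in 𝓝[>] 0, 0 < σ * (ρ * exp ((s * c : ℝ) * I)).im := by
  have him : ∀ s : ℝ, (ρ * exp ((s * c : ℝ) * I)).im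
      = ρ.re * Real.sin (s * c) + ρ.im * Real.cos (s * c) := fun s => by
    rw [Complex.mul_im, exp_ofReal_mul_I_re, exp_ofReal_mul_I_im]
  simp_rw [him]
  rcases h with h | ⟨h0, h⟩
  · apply eventually_nhdsWithin_of_eventually_nhds
    have hcont : Continuous fun s : ℝ =>
        σ * (ρ.re * Real.sin (s * c) + ρ.im * Real.cos (s * c)) := by fun_prop
    exact (hcont.tendsto 0).eventually_const_lt (by simpa using h)
  · have hc : c ≠ 0 := by
      rintro rfl
      simp at h
    filter_upwards [eventually_pos_mul_sin_mul hc] with s hs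
    rw [h0, zero_mul, add_zero]
    refine pos_of_mul_pos_right (a := c ^ 2) ?_ (sq_nonneg c)
    calc 0 < σ * (ρ.re * c) * (c * Real.sin (s * c)) := mul_pos h hs
      _ = c ^ 2 * (σ * (ρ.re * Real.sin (s * c))) := by ring

/-- A sufficient condition for `ρ e^{ist}` to lie in the open cone spanned by `e^{isd}` and `-1`
for all small `s > 0`. -/
def GoodDirection (ρ : ℂ) (d t : ℝ) : Prop :=
  (d = 0 ∧ t = 0 ∧ ρ.im = 0) ∨ (InitiallyPosIm d ρ t ∧ InitiallyPosIm d ρ (t - d))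

lemma exists_eq_pos_mul_exp_sub_pos {σ δ : ℝ} {w : ℂ} (hδ : 0 < σ * Real.sin δ)
    (hw : 0 < σ * w.im) (hwδ : 0 < σ * (w * exp ((-δ : ℝ) * I)).im) :
    ∃ P Q : ℝ, 0 < P ∧ 0 < Q ∧ w = P * exp (δ * I) - Q := by
  refine ⟨σ * w.im / (σ * Real.sin δ), σ * (w * exp ((-δ : ℝ) * I)).im / (σ * Real.sin δ),
    div_pos hw hδ, div_pos hwδ hδ, ?_⟩
  have hσ : σ ≠ 0 := by
    rintro rfl
    simp at hδ
  have hsin : Real.sin δ ≠ 0 := by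
    intro h
    simp [h] at hδ
  apply Complex.ext <;>
  simp only [Complex.mul_im, Complex.mul_re, exp_ofReal_mul_I_re, exp_ofReal_mul_I_im,
    Complex.sub_re, Complex.sub_im, Complex.ofReal_re, Complex.ofReal_im, Real.sin_neg,
    Real.cos_neg] <;>
  field_simp <;>
  ring

lemma GoodDirection.eventually_exists {ρ : ℂ} {d t : ℝ} (h : GoodDirection ρ d t) :
    ∀ᶠ s in 𝓝[>] 0, ∃ P Q : ℝ, 0 < P ∧ 0 < Q ∧
      ρ * exp ((s * t : ℝ) * I) = P * exp ((s * d : ℝ) * I) - Q := by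
  rcases h with ⟨rfl, rfl, h0⟩ | ⟨ht, htd⟩
  · refine Eventually.of_forall fun s =>
      ⟨max ρ.re 0 + 1, max (-ρ.re) 0 + 1, by positivity, by positivity, ?_⟩
    apply Complex.ext <;> simp [h0]
  · filter_upwards [ht.eventually, htd.eventually, eventually_pos_mul_sin_mul ht.ne_zero]
      with s h₁ h₂ h₃
    refine exists_eq_pos_mul_exp_sub_pos h₃ h₁ ?_
    rw [mul_assoc, ← Complex.exp_add]
    convert h₂ using 5
    push_cast
    ring


lemma eventually_mem_coamoeba_of_goodDirection {E : Fin 3 → Fin 2 → ℤ}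
    (hE : (affineMatrix E).det ≠ 0) {c : Fin 3 → ℂ} {ξ φ : Fin 2 → ℝ} (p : Fin 3) {r : ℝ}
    (hr : 0 < r) (hc : c (p.succAbove 1) ≠ 0)
    (hanti : torusMonomial (E (p.succAbove 0)) (c (p.succAbove 0)) ξ
      = -(r * torusMonomial (E (p.succAbove 1)) (c (p.succAbove 1)) ξ))
    (hdir : GoodDirection (torusMonomial (E p) (c p) ξ /
        torusMonomial (E (p.succAbove 1)) (c (p.succAbove 1)) ξ)
      (intDot (E (p.succAbove 0) - E (p.succAbove 1)) φ) (intDot (E p - E (p.succAbove 1)) φ)) :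
    ∀ᶠ s in 𝓝[>] (0 : ℝ), toTorus (ξ + s • φ) ∈ coamoeba E c := by
  filter_upwards [hdir.eventually_exists] with s ⟨P, Q, hP, hQ, hPQ⟩
  refine mem_coamoeba_of_posDependent hE
    (posDependent_of_succAbove p (R := 1) (A := ![P / r, Q]) one_pos (fun i => ?_) ?_)
  · fin_cases i
    exacts [div_pos hP hr, hQ]
  set T := torusMonomial (E (p.succAbove 1)) (c (p.succAbove 1)) ξ
  have hT : T ≠ 0 := torusMonomial_ne_zero hc
  have hshift : ∀ k, exp ((s * intDot (E k) φ : ℝ) * I)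
      = exp ((s * intDot (E k - E (p.succAbove 1)) φ : ℝ) * I)
        * exp ((s * intDot (E (p.succAbove 1)) φ : ℝ) * I) := fun k => by
    rw [← Complex.exp_add, intDot_sub]
    push_cast
    ring_nf
  simp only [Fin.sum_univ_two, torusMonomial_add_smul, Matrix.cons_val_zero, Matrix.cons_val_one,
    hshift p, hshift (p.succAbove 0), hanti, Complex.ofReal_one, one_mul]
  rw [div_mul_eq_mul_div, eq_sub_iff_add_eq, div_add' _ _ _ hT, div_eq_iff hT] at hPQ
  have hPr : ((P / r : ℝ) : ℂ) * r = P := by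
    rw [Complex.ofReal_div, div_mul_cancel₀ _ (Complex.ofReal_ne_zero.2 hr.ne')]
  linear_combination (exp ((s * intDot (E (p.succAbove 1)) φ : ℝ) * I)) * hPQ
    - (T * exp ((s * intDot (E (p.succAbove 0) - E (p.succAbove 1)) φ : ℝ) * I)
      * exp ((s * intDot (E (p.succAbove 1)) φ : ℝ) * I)) * hPr

section Direction

lemma GoodDirection.of_mul_im_pos {ρ : ℂ} {d : ℝ} (h : 0 < d * ρ.im) (t : ℝ) :
    GoodDirection ρ d t :=
  Or.inr ⟨Or.inl h, Or.inl h⟩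

variable {M : Type*} [AddCommGroup M] [Module ℝ M]

lemma exists_goodDirection_of_im_eq_zero {V₁ W₁ V₂ : M →ₗ[ℝ] ℝ} {ρ₁ ρ₂ : ℂ} (hρ₁ : ρ₁ ≠ 0)
    (him₁ : ρ₁.im = 0) (him₂ : ρ₂.im ≠ 0) (hV : ∀ b₁ b₂, ∃ φ, V₁ φ = b₁ ∧ V₂ φ = b₂)
    (hW₁ : ∀ φ, V₁ φ = 0 → W₁ φ = 0 → φ = 0) :
    ∃ φ, GoodDirection ρ₁ (V₁ φ) (W₁ φ) ∧ 0 < V₂ φ * ρ₂.im := by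
  have hre : ρ₁.re ≠ 0 := fun h => hρ₁ (Complex.ext h him₁)
  -- `φ₀` settles `ρ₂` and keeps the first pair opposite; adding a small multiple of `ψ` then
  -- opens that pair towards its real third monomial
  obtain ⟨φ₀, h₀₁, h₀₂⟩ := hV 0 ρ₂.im
  set β := W₁ φ₀
  have hβ : β ≠ 0 := fun h => him₂ (by rw [← h₀₂, hW₁ φ₀ h₀₁ h, map_zero])
  obtain ⟨ψ, hψ₁, hψ₂⟩ := hV (ρ₁.re * β) 0
  have key : ∀ γ : ℝ, ∀ᶠ ε in 𝓝[>] (0 : ℝ), 0 < ε * (β * (β + ε * γ)) := fun γ => by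
    have hcont : Continuous fun ε : ℝ => β * (β + ε * γ) := by fun_prop
    have h := (hcont.tendsto 0).eventually_const_lt
      (show (0 : ℝ) < β * (β + 0 * γ) by rw [zero_mul, add_zero]; exact mul_self_pos.2 hβ)
    filter_upwards [nhdsWithin_le_nhds h, self_mem_nhdsWithin] with ε hε (hε₀ : 0 < ε)
    exact mul_pos hε₀ hε
  obtain ⟨ε, h₁, h₂⟩ := ((key (W₁ ψ)).and (key (W₁ ψ - ρ₁.re * β))).exists
  have hV₁ : V₁ (φ₀ + ε • ψ) = ε * (ρ₁.re * β) := by simp [h₀₁, hψ₁]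
  have hW₁' : W₁ (φ₀ + ε • ψ) = β + ε * W₁ ψ := by simp [β]
  have hsq : 0 < ρ₁.re ^ 2 := sq_pos_of_ne_zero hre
  refine ⟨φ₀ + ε • ψ, Or.inr ⟨Or.inr ⟨him₁, ?_⟩, Or.inr ⟨him₁, ?_⟩⟩, ?_⟩
  · calc 0 < ρ₁.re ^ 2 * (ε * (β * (β + ε * W₁ ψ))) := mul_pos hsq h₁
      _ = _ := by rw [hV₁, hW₁']; ring
  · calc 0 < ρ₁.re ^ 2 * (ε * (β * (β + ε * (W₁ ψ - ρ₁.re * β)))) := mul_pos hsq h₂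
      _ = _ := by rw [hV₁, hW₁']; ring
  · simpa [h₀₂, hψ₂] using mul_self_pos.2 him₂

lemma exists_goodDirection {V₁ W₁ V₂ W₂ : M →ₗ[ℝ] ℝ} {ρ₁ ρ₂ : ℂ} (hρ₁ : ρ₁ ≠ 0) (hρ₂ : ρ₂ ≠ 0)
    (hV : ∀ b₁ b₂, ∃ φ, V₁ φ = b₁ ∧ V₂ φ = b₂)
    (hW₁ : ∀ φ, V₁ φ = 0 → W₁ φ = 0 → φ = 0) (hW₂ : ∀ φ, V₂ φ = 0 → W₂ φ = 0 → φ = 0) :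
    ∃ φ, GoodDirection ρ₁ (V₁ φ) (W₁ φ) ∧ GoodDirection ρ₂ (V₂ φ) (W₂ φ) := by
  rcases eq_or_ne ρ₁.im 0 with h₁ | h₁ <;> rcases eq_or_ne ρ₂.im 0 with h₂ | h₂
  · exact ⟨0, Or.inl ⟨map_zero _, map_zero _, h₁⟩, Or.inl ⟨map_zero _, map_zero _, h₂⟩⟩
  · obtain ⟨φ, h, h'⟩ := exists_goodDirection_of_im_eq_zero hρ₁ h₁ h₂ hV hW₁
    exact ⟨φ, h, .of_mul_im_pos h' _⟩
  · obtain ⟨φ, h, h'⟩ := exists_goodDirection_of_im_eq_zero hρ₂ h₂ h₁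
      (fun b₁ b₂ => (hV b₂ b₁).imp fun _ => And.symm) hW₂
    exact ⟨φ, .of_mul_im_pos h' _, h⟩
  · obtain ⟨φ, hφ₁, hφ₂⟩ := hV ρ₁.im ρ₂.im
    exact ⟨φ, .of_mul_im_pos (by rw [hφ₁]; exact mul_self_pos.2 h₁) _,
      .of_mul_im_pos (by rw [hφ₂]; exact mul_self_pos.2 h₂) _⟩

end Direction

lemma tendsto_toTorus_add_smul {n : ℕ} (ξ φ : Fin n → ℝ) :
    Tendsto (fun s : ℝ => toTorus (ξ + s • φ)) (𝓝[>] 0) (𝓝 (toTorus ξ)) := by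
  have hcont : Continuous fun s : ℝ => toTorus (ξ + s • φ) :=
    continuous_pi fun i => (AddCircle.continuous_mk' _).comp (by fun_prop)
  simpa using (hcont.tendsto 0).mono_left nhdsWithin_le_nhds

theorem subset_closure_inter_coamoeba {E₁ E₂ : Fin 3 → Fin 2 → ℤ} {c₁ c₂ : Fin 3 → ℂ}
    (hE₁ : (affineMatrix E₁).det ≠ 0) (hE₂ : (affineMatrix E₂).det ≠ 0)
    (hc₁ : ∀ j, c₁ j ≠ 0) (hc₂ : ∀ j, c₂ j ≠ 0) {p₁ p₂ : Fin 3}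
    (hv : cross (E₁ (p₁.succAbove 0) - E₁ (p₁.succAbove 1))
      (E₂ (p₂.succAbove 0) - E₂ (p₂.succAbove 1)) ≠ 0) :
    coamoeba (E₁ ∘ p₁.succAbove) (c₁ ∘ p₁.succAbove) ∩
        coamoeba (E₂ ∘ p₂.succAbove) (c₂ ∘ p₂.succAbove) ⊆
      closure (coamoeba E₁ c₁ ∩ coamoeba E₂ c₂) := by
  rintro θ ⟨hθ₁, hθ₂⟩
  obtain ⟨z, rfl, r₁, hr₁, h₁⟩ := exists_antiparallel_of_mem_coamoeba hθ₁
  obtain ⟨w, hzw, r₂, hr₂, h₂⟩ := exists_antiparallel_of_mem_coamoeba hθ₂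
  rw [funext (arg_eq_of_toTorus_arg_eq hzw.symm)] at h₂
  obtain ⟨φ, hφ₁, hφ₂⟩ := exists_goodDirection
    (div_ne_zero (torusMonomial_ne_zero (hc₁ _)) (torusMonomial_ne_zero (hc₁ _)))
    (div_ne_zero (torusMonomial_ne_zero (hc₂ _)) (torusMonomial_ne_zero (hc₂ _)))
    (exists_intDot_eq_of_cross_ne_zero hv)
    (fun _ => eq_zero_of_intDot_sub_succAbove hE₁ p₁)
    (fun _ => eq_zero_of_intDot_sub_succAbove hE₂ p₂)
  refine mem_closure_of_tendsto (tendsto_toTorus_add_smul _ φ) ?_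
  filter_upwards [eventually_mem_coamoeba_of_goodDirection hE₁ p₁ hr₁ (hc₁ _) h₁ hφ₁,
    eventually_mem_coamoeba_of_goodDirection hE₂ p₂ hr₂ (hc₂ _) h₂ hφ₂] with s hs₁ hs₂
  exact ⟨hs₁, hs₂⟩

/-- Let `g₁`, `g₂` be binomial truncations of `F₁ = f₁z^{a₀} + z^{a₂} + f₂z^{a₃}`
and `F₂ = f₃z^{a₁} + z^{a₂} + f₄z^{a₃}` respectively, whose exponent segments are not parallel.
Then `C_{g₁} ∩ C_{g₂}` is contained in the closure of `L_f = C_{F₁} ∩ C_{F₂}`. -/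
theorem shell_points_in_closure (a : Fin 4 → Fin 2 → ℤ) (ha : NondegCircuit a)
    (f : Fin 4 → ℂ) (hf : ∀ k, f k ≠ 0) (d₁ d₂ : Fin 3) :
    let L₁ : Fin 3 → ℂ × (Fin 2 → ℤ) := ![(f 0, a 0), (1, a 2), (f 1, a 3)]
    let L₂ : Fin 3 → ℂ × (Fin 2 → ℤ) := ![(f 2, a 1), (1, a 2), (f 3, a 3)]
    let g₁ : (Fin 2 → ℂ) → ℂ := fun z =>
      (L₁ (d₁.succAbove 0)).1 * lmon (L₁ (d₁.succAbove 0)).2 z +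
        (L₁ (d₁.succAbove 1)).1 * lmon (L₁ (d₁.succAbove 1)).2 z
    let g₂ : (Fin 2 → ℂ) → ℂ := fun z =>
      (L₂ (d₂.succAbove 0)).1 * lmon (L₂ (d₂.succAbove 0)).2 z +
        (L₂ (d₂.succAbove 1)).1 * lmon (L₂ (d₂.succAbove 1)).2 z
    let v₁ : Fin 2 → ℤ := fun i =>
      (L₁ (d₁.succAbove 0)).2 i - (L₁ (d₁.succAbove 1)).2 i
    let v₂ : Fin 2 → ℤ := fun i =>
      (L₂ (d₂.succAbove 0)).2 i - (L₂ (d₂.succAbove 1)).2 i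
    v₁ 0 * v₂ 1 - v₁ 1 * v₂ 0 ≠ 0 →
      coamoebaF g₁ ∩ coamoebaF g₂ ⊆
        closure (coamoebaF (sysF1 a f) ∩ coamoebaF (sysF2 a f)) := by
  intro L₁ L₂ g₁ g₂ v₁ v₂ hv
  set E₁ : Fin 3 → Fin 2 → ℤ := fun j => (L₁ j).2
  set E₂ : Fin 3 → Fin 2 → ℤ := fun j => (L₂ j).2
  set c₁ : Fin 3 → ℂ := fun j => (L₁ j).1
  set c₂ : Fin 3 → ℂ := fun j => (L₂ j).1
  have hE₁ : E₁ = a ∘ Fin.succAbove 1 := by funext j; fin_cases j <;> rfl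
  have hE₂ : E₂ = a ∘ Fin.succAbove 0 := by funext j; fin_cases j <;> rfl
  have hc₁ : ∀ j, c₁ j ≠ 0 := by intro j; fin_cases j <;> simp [c₁, L₁, hf]
  have hc₂ : ∀ j, c₂ j ≠ 0 := by intro j; fin_cases j <;> simp [c₂, L₂, hf]
  have hF₁ : evalPoly E₁ c₁ = sysF1 a f := by
    funext z; simp [evalPoly, Fin.sum_univ_three, sysF1, E₁, c₁, L₁]
  have hF₂ : evalPoly E₂ c₂ = sysF2 a f := by
    funext z; simp [evalPoly, Fin.sum_univ_three, sysF2, E₂, c₂, L₂]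
  have key := subset_closure_inter_coamoeba (E₁ := E₁) (E₂ := E₂)
    (hE₁ ▸ ha.det_affineMatrix_ne_zero 1) (hE₂ ▸ ha.det_affineMatrix_ne_zero 0) hc₁ hc₂
    (p₁ := d₁) (p₂ := d₂) hv
  simp only [coamoeba, evalPoly_fin_two, hF₁, hF₂] at key
  exact key
end
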